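/- arXiv:2309.03041 — 2 statements merged into one kernel-verified Lean document; each statement's English description precedes it below -/
import Mathlib

section
/- Let κ₁, κ₂, κ₃ : 𝔹^m → 𝔹 (m ≥ 2) with: κ₂ true only at one point u; κ₃(u)=0 but κ₃(y)=1 for every y at Hamming distance 1 from u; κ₁ ∧ κ₂ = 0, κ₁ ∧ κ₃ = 0, κ₁ ∨ κ₂ ≠ 1, κ₁ ∨ κ₃ ≠ 1, κ₁(u)=0. Define κ : 𝔹^{m+2} → 𝔹 by κ = κ₁ if x_{n-1}=0; κ = κ₁ ∨ κ₂ if x_{n-1}=1, x_n=0; κ = κ₁ ∨ κ₃ if x_{n-1}=1, x_n=1 (n = m+2). Then for v = (u, 1, 1), feature n−1 is irrelevant, feature n is relevant, and |Sv(n−1)| > |Sv(n)|. -/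
open Finset

/-- `X` is a weak abductive explanation (weak AXp) for classifier `κ` at point `v`:
every point agreeing with `v` on `X` gets the same prediction as `v`. -/
def weakAXp {n : ℕ} (κ : (Fin n → Bool) → Bool) (v : Fin n → Bool)
    (X : Finset (Fin n)) : Prop :=
  ∀ x : Fin n → Bool, (∀ i ∈ X, x i = v i) → κ x = κ v

/-- `X` is an AXp: a subset-minimal weak AXp. -/
def AXp {n : ℕ} (κ : (Fin n → Bool) → Bool) (v : Fin n → Bool)
    (X : Finset (Fin n)) : Prop :=
  weakAXp κ v X ∧ ∀ X' ⊂ X, ¬ weakAXp κ v X'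

/-- `Y` is a weak contrastive explanation (weak CXp) for `κ` at `v`:
some point agreeing with `v` outside `Y` gets a different prediction. -/
def weakCXp {n : ℕ} (κ : (Fin n → Bool) → Bool) (v : Fin n → Bool)
    (Y : Finset (Fin n)) : Prop :=
  ∃ x : Fin n → Bool, (∀ i ∉ Y, x i = v i) ∧ κ x ≠ κ v

/-- `Y` is a CXp: a subset-minimal weak CXp. -/
def CXp {n : ℕ} (κ : (Fin n → Bool) → Bool) (v : Fin n → Bool)
    (Y : Finset (Fin n)) : Prop :=
  weakCXp κ v Y ∧ ∀ Y' ⊂ Y, ¬ weakCXp κ v Y'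

/-- A feature is relevant if it occurs in some AXp. -/
def Relevant {n : ℕ} (κ : (Fin n → Bool) → Bool) (v : Fin n → Bool) (i : Fin n) : Prop :=
  ∃ X, AXp κ v X ∧ i ∈ X

/-- A feature is irrelevant if it occurs in no AXp. -/
def Irrelevant {n : ℕ} (κ : (Fin n → Bool) → Bool) (v : Fin n → Bool) (i : Fin n) : Prop :=
  ¬ Relevant κ v i

/-- `phi κ v S` : average value of `κ` over points agreeing with `v` on `S`
(uniform distribution). -/
noncomputable def phi {n : ℕ} (κ : (Fin n → Bool) → Bool) (v : Fin n → Bool)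
    (S : Finset (Fin n)) : ℝ :=
  (1 / 2 ^ (n - S.card)) *
    ∑ x ∈ Finset.univ.filter (fun x : Fin n → Bool => ∀ i ∈ S, x i = v i),
      (if κ x then (1 : ℝ) else 0)

/-- Shapley value of feature `i` for classifier `κ` at point `v`. -/
noncomputable def Sv {n : ℕ} (κ : (Fin n → Bool) → Bool) (v : Fin n → Bool)
    (i : Fin n) : ℝ :=
  ∑ S ∈ (Finset.univ.erase i).powerset,
    ((S.card.factorial * (n - S.card - 1).factorial : ℝ) / n.factorial) *
      (phi κ v (insert i S) - phi κ v S)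

section AuxStmt17

variable {m : ℕ}

def idxA (m : ℕ) : Fin (m + 2) := ⟨m, Nat.lt_succ_of_lt (Nat.lt_succ_self m)⟩
def idxB (m : ℕ) : Fin (m + 2) := Fin.last (m + 1)

def emb (m : ℕ) : Fin m ↪ Fin (m + 2) :=
  ⟨Fin.castLE (Nat.le_add_right m 2), Fin.castLE_injective _⟩

def glue (x' : Fin m → Bool) (a b : Bool) : Fin (m + 2) → Bool :=
  fun j => if h : (j : ℕ) < m then x' ⟨j, h⟩ else if (j : ℕ) = m then a else b

@[simp] lemma glue_emb (x' : Fin m → Bool) (a b : Bool) (i : Fin m) :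
    glue x' a b (emb m i) = x' i := by
  simp [glue, emb, Fin.castLE]

@[simp] lemma glue_A (x' : Fin m → Bool) (a b : Bool) : glue x' a b (idxA m) = a := by
  simp [glue, idxA]

@[simp] lemma glue_B (x' : Fin m → Bool) (a b : Bool) : glue x' a b (idxB m) = b := by
  simp only [glue, idxB, Fin.last]
  split_ifs with h1 h2
  · omega
  · simp [h1]

lemma glue_comp (x' : Fin m → Bool) (a b : Bool) :
    (fun i => glue x' a b (Fin.castLE (Nat.le_add_right m 2) i)) = x' := by
  funext i
  exact glue_emb x' a b i

def glueEquiv (m : ℕ) : ((Fin m → Bool) × Bool × Bool) ≃ (Fin (m + 2) → Bool) where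
  toFun p := glue p.1 p.2.1 p.2.2
  invFun x := (fun i => x (emb m i), x (idxA m), x (idxB m))
  left_inv p := by
    ext i <;> simp
  right_inv x := by
    funext j
    rcases lt_trichotomy (j : ℕ) m with h | h | h
    · have he : emb m ⟨(j : ℕ), h⟩ = j := by simp [emb, Fin.ext_iff]
      simp only [glue, dif_pos h]
      rw [he]
    · simp only [glue, dif_neg (by omega : ¬ (j:ℕ) < m), if_pos h]
      congr 1
      simp [idxA, Fin.ext_iff, h]
    · have hj : (j : ℕ) = m + 1 := by omega
      simp only [glue, dif_neg (by omega : ¬ (j:ℕ) < m), if_neg (by omega : ¬ (j:ℕ) = m)]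
      congr 1
      simp [idxB, Fin.ext_iff, Fin.last, hj]

lemma sum_glue (f : (Fin (m + 2) → Bool) → ℝ) :
    ∑ x : Fin (m + 2) → Bool, f x
      = ∑ x' : Fin m → Bool, (f (glue x' false false) + f (glue x' false true)
          + f (glue x' true false) + f (glue x' true true)) := by
  rw [← Equiv.sum_comp (glueEquiv m) f, Fintype.sum_prod_type]
  refine Finset.sum_congr rfl fun x' _ => ?_
  rw [Fintype.sum_prod_type]
  simp [glueEquiv, Fintype.sum_bool]
  ring

section Main

variable {κ₁ κ₂ κ₃ : (Fin m → Bool) → Bool} {u : Fin m → Bool}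
  {κ : (Fin (m + 2) → Bool) → Bool} {v : Fin (m + 2) → Bool}

variable (hκ : ∀ x, κ x =
      if x ⟨m, Nat.lt_succ_of_lt (Nat.lt_succ_self m)⟩ = false then
        κ₁ (fun i => x (Fin.castLE (Nat.le_add_right m 2) i))
      else if x (Fin.last (m + 1)) = false then
        (κ₁ (fun i => x (Fin.castLE (Nat.le_add_right m 2) i)) ||
         κ₂ (fun i => x (Fin.castLE (Nat.le_add_right m 2) i)))
      else
        (κ₁ (fun i => x (Fin.castLE (Nat.le_add_right m 2) i)) ||
         κ₃ (fun i => x (Fin.castLE (Nat.le_add_right m 2) i))))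
  (hv : ∀ j : Fin (m + 2), v j = if h : (j : ℕ) < m then u ⟨j, h⟩ else true)

include hκ in
lemma kappa_glue (x' : Fin m → Bool) (a b : Bool) :
    κ (glue x' a b) = if a then (if b then κ₁ x' || κ₃ x' else κ₁ x' || κ₂ x')
      else κ₁ x' := by
  rw [hκ]
  have hA : (⟨m, Nat.lt_succ_of_lt (Nat.lt_succ_self m)⟩ : Fin (m + 2)) = idxA m := rfl
  have hB : Fin.last (m + 1) = idxB m := rfl
  rw [hA, hB, glue_A, glue_B, glue_comp]
  cases a <;> cases b <;> simp

include hv in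
lemma v_glue : v = glue u true true := by
  funext j
  rw [hv]
  by_cases h : (j : ℕ) < m
  · rw [dif_pos h]
    have he : emb m ⟨(j : ℕ), h⟩ = j := by simp [emb, Fin.ext_iff]
    conv_rhs => rw [← he]
    rw [glue_emb]
  · rw [dif_neg h, glue]
    rw [dif_neg h]
    by_cases h2 : (j : ℕ) = m <;> simp [h2]

include hv in
lemma v_emb (i : Fin m) : v (emb m i) = u i := by rw [v_glue hv, glue_emb]

include hκ hv in
lemma kappa_v (hκ1u : κ₁ u = false) (hκ3u : κ₃ u = false) : κ v = false := by
  rw [v_glue hv, kappa_glue hκ]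
  simp [hκ1u, hκ3u]

include hκ hv in
theorem irrel (hκ1u : κ₁ u = false) (hκ3u : κ₃ u = false) :
    Irrelevant κ v (idxA m) := by
  rintro ⟨X, ⟨hwX, hmin⟩, hA⟩
  refine hmin (X.erase (idxA m)) (Finset.erase_ssubset hA) ?_
  intro x hx
  have hvA : v (idxA m) = true := by
    rw [hv]; exact dif_neg (by simp [idxA])
  have hx1 : ∀ i ∈ X, Function.update x (idxA m) true i = v i := by
    intro i hi
    by_cases h : i = idxA m
    · subst h; simp [hvA]
    · rw [Function.update_of_ne h]
      exact hx i (Finset.mem_erase.mpr ⟨h, hi⟩)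
  have h1 : κ (Function.update x (idxA m) true) = κ v := hwX _ hx1
  have hcomp : (fun i => Function.update x (idxA m) true (Fin.castLE (Nat.le_add_right m 2) i))
      = fun i => x (Fin.castLE (Nat.le_add_right m 2) i) := by
    funext i
    apply Function.update_of_ne
    simp [idxA, Fin.ext_iff, Fin.castLE]
    omega
  by_cases hxa : x (idxA m) = true
  · have : Function.update x (idxA m) true = x := by
      funext j
      by_cases h : j = idxA m
      · subst h; simp [hxa]
      · rw [Function.update_of_ne h]
    rwa [this] at h1
  · have hxa' : x (idxA m) = false := by
      cases h : x (idxA m)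
      · rfl
      · exact absurd h hxa
    have hkv : κ v = false := kappa_v hκ hv hκ1u hκ3u
    have hA0 : (⟨m, Nat.lt_succ_of_lt (Nat.lt_succ_self m)⟩ : Fin (m + 2)) = idxA m := rfl
    rw [hκ, hA0, hxa']
    rw [hκ, hA0, hcomp] at h1
    have hA' : Function.update x (idxA m) true (idxA m) = true := by simp
    rw [hA', hkv] at h1
    simp only [Bool.true_eq_false, if_false] at h1
    rw [hkv]
    by_cases hb : Function.update x (idxA m) true (Fin.last (m + 1)) = false
    · rw [if_pos hb] at h1
      exact (Bool.or_eq_false_iff.mp h1).1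
    · rw [if_neg hb] at h1
      exact (Bool.or_eq_false_iff.mp h1).1

include hκ hv in
theorem relev (hκ2 : ∀ y, κ₂ y = true ↔ y = u)
    (hκ3 : ∀ y : Fin m → Bool,
      (Finset.univ.filter (fun i => y i ≠ u i)).card = 1 → κ₃ y = true)
    (hκ1u : κ₁ u = false) (hκ3u : κ₃ u = false) :
    Relevant κ v (idxB m) := by
  classical
  have hkv : κ v = false := kappa_v hκ hv hκ1u hκ3u
  set X : Finset (Fin (m + 2)) := insert (idxB m) (Finset.univ.map (emb m)) with hX
  have hBnotin : idxB m ∉ Finset.univ.map (emb m) := by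
    simp only [Finset.mem_map]
    rintro ⟨i, -, hi⟩
    have : (i : ℕ) = m + 1 := by
      have := congrArg (Fin.val) hi
      simpa [emb, idxB, Fin.last] using this
    omega
  have hBX : idxB m ∈ X := Finset.mem_insert_self _ _
  refine ⟨X, ⟨?_, ?_⟩, hBX⟩
  · -- weak AXp
    intro x hx
    rw [hkv, hκ]
    have hxB : x (Fin.last (m + 1)) = true := by
      have h0 := hx (idxB m) hBX
      have hB0 : Fin.last (m + 1) = idxB m := rfl
      rw [hB0, h0, hv]
      exact dif_neg (by simp [idxB, Fin.last])
    have hcomp : (fun i => x (Fin.castLE (Nat.le_add_right m 2) i)) = u := by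
      funext i
      have hmem : emb m i ∈ X := Finset.mem_insert_of_mem (Finset.mem_map_of_mem _ (Finset.mem_univ i))
      have := hx (emb m i) hmem
      rw [v_emb hv] at this
      exact this
    rw [hcomp, hxB]
    simp [hκ1u, hκ3u, hκ2]
  · -- minimality
    intro X' hss hw'
    obtain ⟨j, hjX, hjX'⟩ := Finset.exists_of_ssubset hss
    -- counterexample for X.erase j, which contains X'
    have hsub : X' ⊆ X.erase j :=
      fun i hi => Finset.mem_erase.mpr ⟨fun h => hjX' (h ▸ hi), hss.subset hi⟩
    rcases Finset.mem_insert.mp hjX with hj | hj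
    · -- j = idxB m : witness glue u true false
      subst hj
      have hxagree : ∀ i ∈ X.erase (idxB m), glue u true false i = v i := by
        rw [hX, Finset.erase_insert hBnotin]
        simp only [Finset.mem_map]
        rintro i ⟨i', -, rfl⟩
        rw [glue_emb, v_emb hv]
      have := hw' _ (fun i hi => hxagree i (hsub hi))
      rw [kappa_glue hκ, hkv] at this
      simp [hκ1u, (hκ2 u).mpr rfl] at this
    · -- j = emb i : witness glue (update u i (!u i)) true true
      obtain ⟨i0, -, rfl⟩ := Finset.mem_map.mp hj
      set y : Fin m → Bool := Function.update u i0 (!u i0) with hy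
      have hxagree : ∀ j' ∈ X.erase (emb m i0), glue y true true j' = v j' := by
        intro j' hj'
        obtain ⟨hne, hjX2⟩ := Finset.mem_erase.mp hj'
        rcases Finset.mem_insert.mp hjX2 with h | h
        · subst h
          rw [glue_B, hv]
          symm
          apply dif_neg
          rw [show ((idxB m : Fin (m + 2)) : ℕ) = m + 1 from rfl]
          omega
        · obtain ⟨i', -, rfl⟩ := Finset.mem_map.mp h
          have hne' : i' ≠ i0 := fun h => hne (by rw [h])
          rw [glue_emb, v_emb hv, hy, Function.update_of_ne hne']
      have hy3 : κ₃ y = true := by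
        apply hκ3
        have : (Finset.univ.filter (fun j => y j ≠ u j)) = {i0} := by
          ext j
          simp only [Finset.mem_filter, Finset.mem_univ, true_and, Finset.mem_singleton]
          constructor
          · intro hne
            by_contra hne'
            exact hne (by rw [hy, Function.update_of_ne hne'])
          · intro hji
            rw [hji, hy, Function.update_self]
            cases u i0 <;> simp
        rw [this, Finset.card_singleton]
      have := hw' _ (fun i hi => hxagree i (hsub hi))
      rw [kappa_glue hκ, hkv] at this
      simp [hy3] at this

lemma hAnotinmap (S₀ : Finset (Fin m)) : idxA m ∉ S₀.map (emb m) := by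
  simp only [Finset.mem_map]
  rintro ⟨i, -, hi⟩
  have := congrArg Fin.val hi
  simp only [emb, idxA, Function.Embedding.coeFn_mk, Fin.coe_castLE] at this
  omega

lemma hBnotinmap (S₀ : Finset (Fin m)) : idxB m ∉ S₀.map (emb m) := by
  simp only [Finset.mem_map]
  rintro ⟨i, -, hi⟩
  have := congrArg Fin.val hi
  simp only [emb, idxB, Function.Embedding.coeFn_mk, Fin.coe_castLE, Fin.val_last] at this
  omega

lemma hABne : idxA m ≠ idxB m := by
  intro h
  have := congrArg Fin.val h
  simp only [idxA, idxB, Fin.val_last] at this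
  omega

include hv in
lemma v_A : v (idxA m) = true := by
  rw [hv]; exact dif_neg (show ¬ (m < m) by omega)

include hv in
lemma v_B : v (idxB m) = true := by
  rw [hv]; exact dif_neg (show ¬ (m + 1 < m) by omega)

include hv in
lemma cond0 (S₀ : Finset (Fin m)) (x' : Fin m → Bool) (a b : Bool) :
    (∀ i ∈ S₀.map (emb m), glue x' a b i = v i) ↔ (∀ i ∈ S₀, x' i = u i) := by
  rw [Finset.forall_mem_map]
  refine forall_congr' fun i => imp_congr_right fun _ => ?_
  rw [glue_emb, v_emb hv]

include hv in
lemma condA (S₀ : Finset (Fin m)) (x' : Fin m → Bool) (a b : Bool) :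
    (∀ i ∈ insert (idxA m) (S₀.map (emb m)), glue x' a b i = v i)
      ↔ (a = true ∧ ∀ i ∈ S₀, x' i = u i) := by
  rw [Finset.forall_mem_insert, glue_A, v_A hv, cond0 hv]

include hv in
lemma condB (S₀ : Finset (Fin m)) (x' : Fin m → Bool) (a b : Bool) :
    (∀ i ∈ insert (idxB m) (S₀.map (emb m)), glue x' a b i = v i)
      ↔ (b = true ∧ ∀ i ∈ S₀, x' i = u i) := by
  rw [Finset.forall_mem_insert, glue_B, v_B hv, cond0 hv]

include hv in
lemma condAB (S₀ : Finset (Fin m)) (x' : Fin m → Bool) (a b : Bool) :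
    (∀ i ∈ insert (idxA m) (insert (idxB m) (S₀.map (emb m))), glue x' a b i = v i)
      ↔ (a = true ∧ b = true ∧ ∀ i ∈ S₀, x' i = u i) := by
  rw [Finset.forall_mem_insert, glue_A, v_A hv, condB hv]

include hκ hv in
lemma phi00 (h12 : ∀ y, ¬(κ₁ y = true ∧ κ₂ y = true))
    (h13 : ∀ y, ¬(κ₁ y = true ∧ κ₃ y = true)) (S₀ : Finset (Fin m)) :
    phi κ v (S₀.map (emb m))
      = phi κ₁ u S₀ + (1/4) * phi κ₂ u S₀ + (1/4) * phi κ₃ u S₀ := by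
  have hk : S₀.card ≤ m := by simpa using Finset.card_le_univ S₀
  unfold phi
  rw [Finset.card_map, show m + 2 - S₀.card = (m - S₀.card) + 2 by omega]
  rw [Finset.sum_filter, Finset.sum_filter, Finset.sum_filter, Finset.sum_filter]
  rw [sum_glue (fun x => if (∀ i ∈ S₀.map (emb m), x i = v i)
      then (if κ x then (1:ℝ) else 0) else 0)]
  have key : ∀ x' : Fin m → Bool,
      ((if (∀ i ∈ S₀.map (emb m), glue x' false false i = v i) then (if κ (glue x' false false) then (1:ℝ) else 0) else 0)
        + (if (∀ i ∈ S₀.map (emb m), glue x' false true i = v i) then (if κ (glue x' false true) then (1:ℝ) else 0) else 0)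
        + (if (∀ i ∈ S₀.map (emb m), glue x' true false i = v i) then (if κ (glue x' true false) then (1:ℝ) else 0) else 0)
        + (if (∀ i ∈ S₀.map (emb m), glue x' true true i = v i) then (if κ (glue x' true true) then (1:ℝ) else 0) else 0))
      = 4 * (if (∀ i ∈ S₀, x' i = u i) then (if κ₁ x' then (1:ℝ) else 0) else 0)
        + (if (∀ i ∈ S₀, x' i = u i) then (if κ₂ x' then (1:ℝ) else 0) else 0)
        + (if (∀ i ∈ S₀, x' i = u i) then (if κ₃ x' then (1:ℝ) else 0) else 0) := by
    intro x'
    by_cases hQ : ∀ i ∈ S₀, x' i = u i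
    · rw [if_pos ((cond0 hv S₀ x' false false).mpr hQ),
        if_pos ((cond0 hv S₀ x' false true).mpr hQ),
        if_pos ((cond0 hv S₀ x' true false).mpr hQ),
        if_pos ((cond0 hv S₀ x' true true).mpr hQ),
        if_pos hQ, if_pos hQ, if_pos hQ,
        kappa_glue hκ, kappa_glue hκ, kappa_glue hκ, kappa_glue hκ]
      have H12 := h12 x'
      have H13 := h13 x'
      cases hc1 : κ₁ x' <;> cases hc2 : κ₂ x' <;> cases hc3 : κ₃ x' <;>
        simp_all <;> norm_num
    · rw [if_neg (fun h => hQ ((cond0 hv S₀ x' false false).mp h)),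
        if_neg (fun h => hQ ((cond0 hv S₀ x' false true).mp h)),
        if_neg (fun h => hQ ((cond0 hv S₀ x' true false).mp h)),
        if_neg (fun h => hQ ((cond0 hv S₀ x' true true).mp h)),
        if_neg hQ, if_neg hQ, if_neg hQ]
      norm_num
  rw [Finset.sum_congr rfl (fun x' _ => key x')]
  rw [Finset.sum_add_distrib, Finset.sum_add_distrib, ← Finset.mul_sum]
  have h2 : ((2:ℝ) ^ (m - S₀.card + 2)) = 2 ^ (m - S₀.card) * 4 := by
    rw [pow_add]; norm_num
  rw [h2]
  have hne : ((2:ℝ) ^ (m - S₀.card)) ≠ 0 := by positivity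
  field_simp

include hκ hv in
lemma phi10 (h12 : ∀ y, ¬(κ₁ y = true ∧ κ₂ y = true))
    (h13 : ∀ y, ¬(κ₁ y = true ∧ κ₃ y = true)) (S₀ : Finset (Fin m)) :
    phi κ v (insert (idxA m) (S₀.map (emb m)))
      = phi κ₁ u S₀ + (1/2) * phi κ₂ u S₀ + (1/2) * phi κ₃ u S₀ := by
  have hk : S₀.card ≤ m := by simpa using Finset.card_le_univ S₀
  unfold phi
  rw [Finset.card_insert_of_notMem (hAnotinmap S₀), Finset.card_map,
    show m + 2 - (S₀.card + 1) = (m - S₀.card) + 1 by omega]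
  simp only [Finset.sum_filter]
  rw [sum_glue (fun x => if (∀ i ∈ insert (idxA m) (S₀.map (emb m)), x i = v i)
      then (if κ x then (1:ℝ) else 0) else 0)]
  have key : ∀ x' : Fin m → Bool,
      ((if (∀ i ∈ insert (idxA m) (S₀.map (emb m)), glue x' false false i = v i) then (if κ (glue x' false false) then (1:ℝ) else 0) else 0)
        + (if (∀ i ∈ insert (idxA m) (S₀.map (emb m)), glue x' false true i = v i) then (if κ (glue x' false true) then (1:ℝ) else 0) else 0)
        + (if (∀ i ∈ insert (idxA m) (S₀.map (emb m)), glue x' true false i = v i) then (if κ (glue x' true false) then (1:ℝ) else 0) else 0)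
        + (if (∀ i ∈ insert (idxA m) (S₀.map (emb m)), glue x' true true i = v i) then (if κ (glue x' true true) then (1:ℝ) else 0) else 0))
      = 2 * (if (∀ i ∈ S₀, x' i = u i) then (if κ₁ x' then (1:ℝ) else 0) else 0)
        + (if (∀ i ∈ S₀, x' i = u i) then (if κ₂ x' then (1:ℝ) else 0) else 0)
        + (if (∀ i ∈ S₀, x' i = u i) then (if κ₃ x' then (1:ℝ) else 0) else 0) := by
    intro x'
    rw [if_neg (by rw [condA hv]; simp), if_neg (by rw [condA hv]; simp)]
    by_cases hQ : ∀ i ∈ S₀, x' i = u i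
    · rw [if_pos ((condA hv S₀ x' true false).mpr ⟨rfl, hQ⟩),
        if_pos ((condA hv S₀ x' true true).mpr ⟨rfl, hQ⟩),
        if_pos hQ, if_pos hQ, if_pos hQ, kappa_glue hκ, kappa_glue hκ]
      have H12 := h12 x'
      have H13 := h13 x'
      cases hc1 : κ₁ x' <;> cases hc2 : κ₂ x' <;> cases hc3 : κ₃ x' <;>
        simp_all <;> norm_num
    · rw [if_neg (by rw [condA hv]; exact fun h => hQ h.2),
        if_neg (by rw [condA hv]; exact fun h => hQ h.2),
        if_neg hQ, if_neg hQ, if_neg hQ]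
      norm_num
  rw [Finset.sum_congr rfl (fun x' _ => key x')]
  rw [Finset.sum_add_distrib, Finset.sum_add_distrib, ← Finset.mul_sum]
  have h2 : ((2:ℝ) ^ (m - S₀.card + 1)) = 2 ^ (m - S₀.card) * 2 := by
    rw [pow_add]; norm_num
  rw [h2]
  have hne : ((2:ℝ) ^ (m - S₀.card)) ≠ 0 := by positivity
  field_simp

include hκ hv in
lemma phi01 (h12 : ∀ y, ¬(κ₁ y = true ∧ κ₂ y = true))
    (h13 : ∀ y, ¬(κ₁ y = true ∧ κ₃ y = true)) (S₀ : Finset (Fin m)) :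
    phi κ v (insert (idxB m) (S₀.map (emb m)))
      = phi κ₁ u S₀ + (1/2) * phi κ₃ u S₀ := by
  have hk : S₀.card ≤ m := by simpa using Finset.card_le_univ S₀
  unfold phi
  rw [Finset.card_insert_of_notMem (hBnotinmap S₀), Finset.card_map,
    show m + 2 - (S₀.card + 1) = (m - S₀.card) + 1 by omega]
  simp only [Finset.sum_filter]
  rw [sum_glue (fun x => if (∀ i ∈ insert (idxB m) (S₀.map (emb m)), x i = v i)
      then (if κ x then (1:ℝ) else 0) else 0)]
  have key : ∀ x' : Fin m → Bool,
      ((if (∀ i ∈ insert (idxB m) (S₀.map (emb m)), glue x' false false i = v i) then (if κ (glue x' false false) then (1:ℝ) else 0) else 0)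
        + (if (∀ i ∈ insert (idxB m) (S₀.map (emb m)), glue x' false true i = v i) then (if κ (glue x' false true) then (1:ℝ) else 0) else 0)
        + (if (∀ i ∈ insert (idxB m) (S₀.map (emb m)), glue x' true false i = v i) then (if κ (glue x' true false) then (1:ℝ) else 0) else 0)
        + (if (∀ i ∈ insert (idxB m) (S₀.map (emb m)), glue x' true true i = v i) then (if κ (glue x' true true) then (1:ℝ) else 0) else 0))
      = 2 * (if (∀ i ∈ S₀, x' i = u i) then (if κ₁ x' then (1:ℝ) else 0) else 0)
        + (if (∀ i ∈ S₀, x' i = u i) then (if κ₃ x' then (1:ℝ) else 0) else 0) := by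
    intro x'
    have k1 : ¬(∀ i ∈ insert (idxB m) (S₀.map (emb m)), glue x' false false i = v i) := by
      rw [condB hv]; simp
    have k2 : ¬(∀ i ∈ insert (idxB m) (S₀.map (emb m)), glue x' true false i = v i) := by
      rw [condB hv]; simp
    rw [if_neg k1, if_neg k2]
    by_cases hQ : ∀ i ∈ S₀, x' i = u i
    · rw [if_pos ((condB hv S₀ x' false true).mpr ⟨rfl, hQ⟩),
        if_pos ((condB hv S₀ x' true true).mpr ⟨rfl, hQ⟩),
        if_pos hQ, if_pos hQ, kappa_glue hκ, kappa_glue hκ]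
      have H13 := h13 x'
      cases hc1 : κ₁ x' <;> cases hc3 : κ₃ x' <;>
        simp_all <;> norm_num
    · rw [if_neg (by rw [condB hv]; exact fun h => hQ h.2),
        if_neg (by rw [condB hv]; exact fun h => hQ h.2),
        if_neg hQ, if_neg hQ]
      norm_num
  rw [Finset.sum_congr rfl (fun x' _ => key x')]
  rw [Finset.sum_add_distrib, ← Finset.mul_sum]
  have h2 : ((2:ℝ) ^ (m - S₀.card + 1)) = 2 ^ (m - S₀.card) * 2 := by
    rw [pow_add]; norm_num
  rw [h2]
  have hne : ((2:ℝ) ^ (m - S₀.card)) ≠ 0 := by positivity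
  field_simp

include hκ hv in
lemma phi11 (h12 : ∀ y, ¬(κ₁ y = true ∧ κ₂ y = true))
    (h13 : ∀ y, ¬(κ₁ y = true ∧ κ₃ y = true)) (S₀ : Finset (Fin m)) :
    phi κ v (insert (idxA m) (insert (idxB m) (S₀.map (emb m))))
      = phi κ₁ u S₀ + phi κ₃ u S₀ := by
  have hk : S₀.card ≤ m := by simpa using Finset.card_le_univ S₀
  unfold phi
  rw [Finset.card_insert_of_notMem (by
      simp only [Finset.mem_insert]
      rintro (h | h)
      exacts [hABne h, hAnotinmap S₀ h]),
    Finset.card_insert_of_notMem (hBnotinmap S₀), Finset.card_map,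
    show m + 2 - (S₀.card + 1 + 1) = m - S₀.card by omega]
  simp only [Finset.sum_filter]
  rw [sum_glue (fun x => if (∀ i ∈ insert (idxA m) (insert (idxB m) (S₀.map (emb m))), x i = v i)
      then (if κ x then (1:ℝ) else 0) else 0)]
  have key : ∀ x' : Fin m → Bool,
      ((if (∀ i ∈ insert (idxA m) (insert (idxB m) (S₀.map (emb m))), glue x' false false i = v i) then (if κ (glue x' false false) then (1:ℝ) else 0) else 0)
        + (if (∀ i ∈ insert (idxA m) (insert (idxB m) (S₀.map (emb m))), glue x' false true i = v i) then (if κ (glue x' false true) then (1:ℝ) else 0) else 0)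
        + (if (∀ i ∈ insert (idxA m) (insert (idxB m) (S₀.map (emb m))), glue x' true false i = v i) then (if κ (glue x' true false) then (1:ℝ) else 0) else 0)
        + (if (∀ i ∈ insert (idxA m) (insert (idxB m) (S₀.map (emb m))), glue x' true true i = v i) then (if κ (glue x' true true) then (1:ℝ) else 0) else 0))
      = (if (∀ i ∈ S₀, x' i = u i) then (if κ₁ x' then (1:ℝ) else 0) else 0)
        + (if (∀ i ∈ S₀, x' i = u i) then (if κ₃ x' then (1:ℝ) else 0) else 0) := by
    intro x'
    rw [if_neg (by rw [condAB hv]; simp), if_neg (by rw [condAB hv]; simp),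
      if_neg (by rw [condAB hv]; simp)]
    by_cases hQ : ∀ i ∈ S₀, x' i = u i
    · rw [if_pos ((condAB hv S₀ x' true true).mpr ⟨rfl, rfl, hQ⟩),
        if_pos hQ, if_pos hQ, kappa_glue hκ]
      have H13 := h13 x'
      cases hc1 : κ₁ x' <;> cases hc3 : κ₃ x' <;>
        simp_all <;> norm_num
    · rw [if_neg (by rw [condAB hv]; exact fun h => hQ h.2.2),
        if_neg hQ, if_neg hQ]
      norm_num
  rw [Finset.sum_congr rfl (fun x' _ => key x')]
  rw [Finset.sum_add_distrib]
  ring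

noncomputable def W (m j : ℕ) : ℝ :=
  (j.factorial : ℝ) * ((m + 1 - j).factorial : ℝ) / ((m + 2).factorial : ℝ)

lemma erase_A_eq : (Finset.univ : Finset (Fin (m + 2))).erase (idxA m)
    = insert (idxB m) ((Finset.univ : Finset (Fin m)).map (emb m)) := by
  ext j
  simp only [Finset.mem_erase, Finset.mem_univ, and_true, Finset.mem_insert,
    Finset.mem_map, true_and]
  constructor
  · intro h
    by_cases hj : (j : ℕ) < m
    · exact Or.inr ⟨⟨(j : ℕ), hj⟩, by simp [emb, Fin.ext_iff]⟩
    · have hne : (j : ℕ) ≠ m := fun hh => h (by simp [idxA, Fin.ext_iff, hh])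
      have : (j : ℕ) = m + 1 := by omega
      exact Or.inl (by simp [idxB, Fin.ext_iff, Fin.val_last, this])
  · rintro (rfl | ⟨i, -, rfl⟩)
    · intro h
      have := congrArg Fin.val h
      simp only [idxB, idxA, Fin.val_last] at this
      omega
    · intro h
      have := congrArg Fin.val h
      simp only [emb, idxA, Function.Embedding.coeFn_mk, Fin.coe_castLE] at this
      omega

lemma erase_B_eq : (Finset.univ : Finset (Fin (m + 2))).erase (idxB m)
    = insert (idxA m) ((Finset.univ : Finset (Fin m)).map (emb m)) := by
  ext j
  simp only [Finset.mem_erase, Finset.mem_univ, and_true, Finset.mem_insert,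
    Finset.mem_map, true_and]
  constructor
  · intro h
    by_cases hj : (j : ℕ) < m
    · exact Or.inr ⟨⟨(j : ℕ), hj⟩, by simp [emb, Fin.ext_iff]⟩
    · have hne : (j : ℕ) ≠ m + 1 := fun hh => h (by simp [idxB, Fin.ext_iff, Fin.val_last, hh])
      have : (j : ℕ) = m := by omega
      exact Or.inl (by simp [idxA, Fin.ext_iff, this])
  · rintro (rfl | ⟨i, -, rfl⟩)
    · intro h
      have := congrArg Fin.val h
      simp only [idxB, idxA, Fin.val_last] at this
      omega
    · intro h
      have := congrArg Fin.val h
      simp only [emb, idxB, Function.Embedding.coeFn_mk, Fin.coe_castLE, Fin.val_last] at this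
      omega

lemma powerset_map_eq : ((Finset.univ : Finset (Fin m)).map (emb m)).powerset
    = (Finset.univ : Finset (Fin m)).powerset.image (Finset.map (emb m)) := by
  ext T
  simp only [Finset.mem_powerset, Finset.mem_image, Finset.subset_map_iff]
  constructor
  · rintro ⟨U, hU, rfl⟩
    exact ⟨U, hU, rfl⟩
  · rintro ⟨U, hU, rfl⟩
    exact ⟨U, hU, rfl⟩

lemma insert_injOn (c : Fin (m + 2)) (hc : c ∉ (Finset.univ : Finset (Fin m)).map (emb m)) :
    ∀ x ∈ ((Finset.univ : Finset (Fin m)).map (emb m)).powerset,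
      ∀ y ∈ ((Finset.univ : Finset (Fin m)).map (emb m)).powerset,
        insert c x = insert c y → x = y := by
  intro x hx y hy h
  have hcx : c ∉ x := fun h' => hc (Finset.mem_powerset.mp hx h')
  have hcy : c ∉ y := fun h' => hc (Finset.mem_powerset.mp hy h')
  have := congrArg (fun S => Finset.erase S c) h
  simpa [Finset.erase_insert hcx, Finset.erase_insert hcy] using this

lemma map_injOn_pow : ∀ x ∈ (Finset.univ : Finset (Fin m)).powerset,
    ∀ y ∈ (Finset.univ : Finset (Fin m)).powerset,
      Finset.map (emb m) x = Finset.map (emb m) y → x = y :=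
  fun x _ y _ h => Finset.map_injective _ h

lemma pow_disj (c : Fin (m + 2)) (hc : c ∉ (Finset.univ : Finset (Fin m)).map (emb m)) :
    Disjoint ((Finset.univ : Finset (Fin m)).map (emb m)).powerset
      (((Finset.univ : Finset (Fin m)).map (emb m)).powerset.image (insert c)) := by
  rw [Finset.disjoint_left]
  intro S hS hS'
  obtain ⟨T, hT, rfl⟩ := Finset.mem_image.mp hS'
  exact hc (Finset.mem_powerset.mp hS (Finset.mem_insert_self c T))

include hκ hv in
lemma SvA_eq (h12 : ∀ y, ¬(κ₁ y = true ∧ κ₂ y = true))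
    (h13 : ∀ y, ¬(κ₁ y = true ∧ κ₃ y = true)) :
    Sv κ v (idxA m) = ∑ S₀ ∈ (Finset.univ : Finset (Fin m)).powerset,
      (W m S₀.card * ((1/4) * phi κ₂ u S₀ + (1/4) * phi κ₃ u S₀)
        + W m (S₀.card + 1) * ((1/2) * phi κ₃ u S₀)) := by
  unfold Sv
  rw [erase_A_eq, Finset.powerset_insert,
    Finset.sum_union (pow_disj (idxB m) (hBnotinmap _)),
    Finset.sum_image (insert_injOn (idxB m) (hBnotinmap _)),
    powerset_map_eq, Finset.sum_image map_injOn_pow, Finset.sum_image map_injOn_pow,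
    ← Finset.sum_add_distrib]
  refine Finset.sum_congr rfl fun S₀ _ => ?_
  rw [Finset.card_map, Finset.card_insert_of_notMem (hBnotinmap S₀), Finset.card_map,
    phi00 hκ hv h12 h13 S₀, phi10 hκ hv h12 h13 S₀, phi01 hκ hv h12 h13 S₀,
    phi11 hκ hv h12 h13 S₀]
  unfold W
  rw [show m + 2 - S₀.card - 1 = m + 1 - S₀.card from by
      have : S₀.card ≤ m := by simpa using Finset.card_le_univ S₀
      omega,
    show m + 2 - (S₀.card + 1) - 1 = m + 1 - (S₀.card + 1) from by
      have : S₀.card ≤ m := by simpa using Finset.card_le_univ S₀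
      omega]
  ring

include hκ hv in
lemma SvB_eq (h12 : ∀ y, ¬(κ₁ y = true ∧ κ₂ y = true))
    (h13 : ∀ y, ¬(κ₁ y = true ∧ κ₃ y = true)) :
    Sv κ v (idxB m) = ∑ S₀ ∈ (Finset.univ : Finset (Fin m)).powerset,
      (W m S₀.card * ((1/4) * phi κ₃ u S₀ - (1/4) * phi κ₂ u S₀)
        + W m (S₀.card + 1) * ((1/2) * phi κ₃ u S₀ - (1/2) * phi κ₂ u S₀)) := by
  unfold Sv
  rw [erase_B_eq, Finset.powerset_insert,
    Finset.sum_union (pow_disj (idxA m) (hAnotinmap _)),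
    Finset.sum_image (insert_injOn (idxA m) (hAnotinmap _)),
    powerset_map_eq, Finset.sum_image map_injOn_pow, Finset.sum_image map_injOn_pow,
    ← Finset.sum_add_distrib]
  refine Finset.sum_congr rfl fun S₀ _ => ?_
  rw [Finset.card_map, Finset.card_insert_of_notMem (hAnotinmap S₀), Finset.card_map]
  rw [show insert (idxB m) (insert (idxA m) (S₀.map (emb m)))
      = insert (idxA m) (insert (idxB m) (S₀.map (emb m))) from Finset.insert_comm _ _ _]
  rw [phi00 hκ hv h12 h13 S₀, phi10 hκ hv h12 h13 S₀, phi01 hκ hv h12 h13 S₀,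
    phi11 hκ hv h12 h13 S₀]
  unfold W
  rw [show m + 2 - S₀.card - 1 = m + 1 - S₀.card from by
      have : S₀.card ≤ m := by simpa using Finset.card_le_univ S₀
      omega,
    show m + 2 - (S₀.card + 1) - 1 = m + 1 - (S₀.card + 1) from by
      have : S₀.card ≤ m := by simpa using Finset.card_le_univ S₀
      omega]
  ring

lemma W_pos (j : ℕ) : 0 < W m j := by
  unfold W
  have h1 : (0:ℝ) < (j.factorial : ℝ) := by exact_mod_cast j.factorial_pos
  have h2 : (0:ℝ) < ((m + 1 - j).factorial : ℝ) := by exact_mod_cast (m + 1 - j).factorial_pos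
  have h3 : (0:ℝ) < ((m + 2).factorial : ℝ) := by exact_mod_cast (m + 2).factorial_pos
  positivity

lemma e2_val (hκ2 : ∀ y, κ₂ y = true ↔ y = u) (S₀ : Finset (Fin m)) :
    phi κ₂ u S₀ = 1 / 2 ^ (m - S₀.card) := by
  unfold phi
  have h1 : ∑ x ∈ Finset.univ.filter (fun x : Fin m → Bool => ∀ i ∈ S₀, x i = u i),
      (if κ₂ x then (1:ℝ) else 0) = 1 := by
    rw [Finset.sum_congr rfl (fun x _ => show (if κ₂ x then (1:ℝ) else 0)
        = (if x = u then (1:ℝ) else 0) from by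
      by_cases h : x = u
      · rw [if_pos ((hκ2 x).mpr h), if_pos h]
      · rw [if_neg (fun hh => h ((hκ2 x).mp hh)), if_neg h])]
    rw [Finset.sum_ite_eq' _ u (fun _ => (1:ℝ))]
    rw [if_pos (by simp)]
  rw [h1, mul_one]

lemma e3_nonneg (S₀ : Finset (Fin m)) : 0 ≤ phi κ₃ u S₀ := by
  unfold phi
  apply mul_nonneg (by positivity)
  apply Finset.sum_nonneg
  intro x _
  by_cases h : κ₃ x <;> simp [h]

lemma e3_univ (hκ3u : κ₃ u = false) : phi κ₃ u (Finset.univ : Finset (Fin m)) = 0 := by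
  unfold phi
  have h1 : (Finset.univ.filter (fun x : Fin m → Bool => ∀ i ∈ Finset.univ, x i = u i)) = {u} := by
    ext x
    simp only [Finset.mem_filter, Finset.mem_univ, true_and, Finset.mem_singleton]
    constructor
    · intro h
      funext i
      first
        | exact h i (Finset.mem_univ i)
        | exact h i trivial

    · rintro rfl i _; rfl
  rw [h1, Finset.sum_singleton, hκ3u]
  norm_num

lemma e3_sphere (hκ3 : ∀ y : Fin m → Bool,
      (Finset.univ.filter (fun i => y i ≠ u i)).card = 1 → κ₃ y = true)
    (S₀ : Finset (Fin m)) :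
    ((m - S₀.card : ℕ) : ℝ) * (1 / 2 ^ (m - S₀.card)) ≤ phi κ₃ u S₀ := by
  classical
  unfold phi
  rw [mul_comm ((1:ℝ) / 2 ^ (m - S₀.card)) _]
  apply mul_le_mul_of_nonneg_right ?_ (by positivity)
  -- sum bound
  set T : Finset (Fin m → Bool) :=
    ((Finset.univ : Finset (Fin m)) \ S₀).image (fun i => Function.update u i (!u i)) with hT
  have hinj : Set.InjOn (fun i => Function.update u i (!u i))
      (↑((Finset.univ : Finset (Fin m)) \ S₀) : Set (Fin m)) := by
    intro i _ j _ h
    by_contra hne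
    have h2 : Function.update u i (!u i) i = Function.update u j (!u j) i := congrFun h i
    rw [Function.update_self, Function.update_of_ne hne] at h2
    cases hui : u i <;> rw [hui] at h2 <;> simp at h2
  have hcardT : T.card = m - S₀.card := by
    rw [hT, Finset.card_image_of_injOn hinj, Finset.card_sdiff_of_subset (Finset.subset_univ S₀)]
    simp
  have hTsub : T ⊆ Finset.univ.filter (fun x : Fin m → Bool => ∀ i ∈ S₀, x i = u i) := by
    intro x hx
    obtain ⟨i, hi, rfl⟩ := Finset.mem_image.mp hx
    rw [Finset.mem_sdiff] at hi
    refine Finset.mem_filter.mpr ⟨Finset.mem_univ _, fun j hj => ?_⟩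
    refine Function.update_of_ne (fun hh => hi.2 ?_) _ _
    rw [← hh]
    exact hj
  have hval : ∀ x ∈ T, (if κ₃ x then (1:ℝ) else 0) = 1 := by
    intro x hx
    obtain ⟨i, hi, rfl⟩ := Finset.mem_image.mp hx
    have h3 : κ₃ (Function.update u i (!u i)) = true := by
      apply hκ3
      have : (Finset.univ.filter (fun j => Function.update u i (!u i) j ≠ u j)) = {i} := by
        ext j
        simp only [Finset.mem_filter, Finset.mem_univ, true_and, Finset.mem_singleton]
        constructor
        · intro hne
          by_contra hne'
          exact hne (by rw [Function.update_of_ne hne'])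
        · intro hji
          rw [hji, Function.update_self]
          cases u i <;> simp
      rw [this, Finset.card_singleton]
    rw [if_pos h3]
  calc ((m - S₀.card : ℕ) : ℝ) = ∑ x ∈ T, (if κ₃ x then (1:ℝ) else 0) := by
        rw [Finset.sum_congr rfl hval, Finset.sum_const, ← hcardT]
        simp
    _ ≤ _ := Finset.sum_le_sum_of_subset_of_nonneg hTsub
        (fun x _ _ => by by_cases h : κ₃ x <;> simp [h])

noncomputable def lbd (m : ℕ) : ℕ → ℝ := fun k =>
  if k = m then -(1/2) * W m (m+1)
  else if k = m-1 then (1/4) * (W m (m-1) + W m m)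
  else if k = m-2 then (1/4) * W m (m-2) + (3/8) * W m (m-1)
  else 0

lemma lbd_le_term (hm : 2 ≤ m) (hκ2 : ∀ y, κ₂ y = true ↔ y = u)
    (hκ3 : ∀ y : Fin m → Bool,
      (Finset.univ.filter (fun i => y i ≠ u i)).card = 1 → κ₃ y = true)
    (S₀ : Finset (Fin m)) :
    lbd m S₀.card ≤
      (W m S₀.card * ((1/4) * phi κ₂ u S₀ + (1/4) * phi κ₃ u S₀)
        + W m (S₀.card + 1) * ((1/2) * phi κ₃ u S₀))
      + (W m S₀.card * ((1/4) * phi κ₃ u S₀ - (1/4) * phi κ₂ u S₀)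
        + W m (S₀.card + 1) * ((1/2) * phi κ₃ u S₀ - (1/2) * phi κ₂ u S₀)) := by
  have hk : S₀.card ≤ m := by simpa using Finset.card_le_univ S₀
  have e2v := e2_val hκ2 S₀
  have e3s := e3_sphere hκ3 S₀
  have e3n : 0 ≤ phi κ₃ u S₀ := e3_nonneg S₀
  rw [e2v]
  unfold lbd
  by_cases h1 : S₀.card = m
  · rw [if_pos h1, h1, Nat.sub_self, pow_zero]
    have w1 := W_pos (m := m) m
    have w2 := W_pos (m := m) (m + 1)
    nlinarith [mul_nonneg w1.le e3n, mul_nonneg w2.le e3n]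
  · rw [if_neg h1]
    by_cases h2 : S₀.card = m - 1
    · rw [if_pos h2, h2, show m - (m-1) = 1 from by omega, show m - 1 + 1 = m from by omega]
      rw [h2, show m - (m-1) = 1 from by omega] at e3s
      push_cast at e3s
      norm_num at e3s ⊢
      have w1 := W_pos (m := m) (m - 1)
      have w2 := W_pos (m := m) m
      nlinarith [mul_nonneg w1.le (by linarith : (0:ℝ) ≤ phi κ₃ u S₀ - 1/2),
        mul_nonneg w2.le (by linarith : (0:ℝ) ≤ phi κ₃ u S₀ - 1/2)]
    · rw [if_neg h2]
      by_cases h3 : S₀.card = m - 2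
      · rw [if_pos h3, h3, show m - (m-2) = 2 from by omega, show m - 2 + 1 = m - 1 from by omega]
        rw [h3, show m - (m-2) = 2 from by omega] at e3s
        push_cast at e3s
        norm_num at e3s ⊢
        have w1 := W_pos (m := m) (m - 2)
        have w2 := W_pos (m := m) (m - 1)
        nlinarith [mul_nonneg w1.le (by linarith : (0:ℝ) ≤ phi κ₃ u S₀ - 1/2),
          mul_nonneg w2.le (by linarith : (0:ℝ) ≤ phi κ₃ u S₀ - 1/2)]
      · rw [if_neg h3]
        have hklt : S₀.card < m := by omega
        have hge1 : (1:ℝ) ≤ ((m - S₀.card : ℕ) : ℝ) := by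
          have : 1 ≤ m - S₀.card := by omega
          exact_mod_cast this
        have hp : (0:ℝ) < 1 / 2 ^ (m - S₀.card) := by positivity
        have he3p : 1 / 2 ^ (m - S₀.card) ≤ phi κ₃ u S₀ := by nlinarith
        have w1 := W_pos (m := m) S₀.card
        have w2 := W_pos (m := m) (S₀.card + 1)
        nlinarith [mul_nonneg w1.le e3n,
          mul_nonneg w2.le (by linarith : (0:ℝ) ≤ phi κ₃ u S₀ - 1 / 2 ^ (m - S₀.card))]

lemma sum_lbd_pos (hm : 2 ≤ m) :
    0 < ∑ S₀ ∈ (Finset.univ : Finset (Fin m)).powerset, lbd m S₀.card := by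
  classical
  rw [Finset.powerset_card_disjiUnion]
  erw [Finset.sum_disjiUnion]
  have hc : (Finset.univ : Finset (Fin m)).card = m := by simp
  have hstep : ∀ j ∈ Finset.range ((Finset.univ : Finset (Fin m)).card + 1),
      ∑ S₀ ∈ Finset.powersetCard j (Finset.univ : Finset (Fin m)), lbd m S₀.card
        = (m.choose j : ℝ) * lbd m j := by
    intro j _
    rw [Finset.sum_congr rfl (fun S₀ hS₀ => by
        rw [(Finset.mem_powersetCard.mp hS₀).2]),
      Finset.sum_const, Finset.card_powersetCard, hc, nsmul_eq_mul]
  rw [Finset.sum_congr rfl hstep, hc]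
  have hsub : ({m-2, m-1, m} : Finset ℕ) ⊆ Finset.range (m + 1) := by
    intro j hj
    simp only [Finset.mem_insert, Finset.mem_singleton] at hj
    rcases hj with rfl | rfl | rfl <;> simp [Finset.mem_range] <;> omega
  have hvan : ∀ j ∈ Finset.range (m + 1), j ∉ ({m-2, m-1, m} : Finset ℕ) →
      (m.choose j : ℝ) * lbd m j = 0 := by
    intro j _ hj
    simp only [Finset.mem_insert, Finset.mem_singleton, not_or] at hj
    unfold lbd
    rw [if_neg hj.2.2, if_neg hj.2.1, if_neg hj.1, mul_zero]
  rw [← Finset.sum_subset hsub hvan]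
  have hne1 : (m-2) ∉ ({m-1, m} : Finset ℕ) := by
    simp only [Finset.mem_insert, Finset.mem_singleton]
    omega
  have hne2 : (m-1) ∉ ({m} : Finset ℕ) := by
    simp only [Finset.mem_singleton]
    omega
  rw [show ({m-2, m-1, m} : Finset ℕ) = insert (m-2) (insert (m-1) {m}) from rfl,
    Finset.sum_insert hne1, Finset.sum_insert hne2, Finset.sum_singleton]
  have l1 : lbd m (m-2) = (1/4) * W m (m-2) + (3/8) * W m (m-1) := by
    unfold lbd
    rw [if_neg (by omega), if_neg (by omega), if_pos rfl]
  have l2 : lbd m (m-1) = (1/4) * (W m (m-1) + W m m) := by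
    unfold lbd
    rw [if_neg (by omega), if_pos rfl]
  have l3 : lbd m m = -(1/2) * W m (m+1) := by
    unfold lbd
    rw [if_pos rfl]
  rw [l1, l2, l3, Nat.choose_self]
  rw [show m.choose (m-1) = m from by
      rw [Nat.choose_symm (by omega : 1 ≤ m), Nat.choose_one_right],
    show m.choose (m-2) = m.choose 2 from Nat.choose_symm (by omega : 2 ≤ m),
    Nat.cast_choose_two]
  obtain ⟨k, rfl⟩ : ∃ k, m = k + 2 := ⟨m - 2, by omega⟩
  unfold W
  rw [show k + 2 - 2 = k from by omega, show k + 2 - 1 = k + 1 from by omega,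
    show k + 2 + 1 - k = 3 from by omega, show k + 2 + 1 - (k+1) = 2 from by omega,
    show k + 2 + 1 - (k+2) = 1 from by omega, show k + 2 + 1 - (k+2+1) = 0 from by omega,
    show k + 2 + 2 = k + 4 from by omega, show k + 2 + 1 = k + 3 from by omega]
  have f4 : ((k+4).factorial : ℝ) = (k+4) * ((k+3).factorial : ℝ) := by
    rw [show k + 4 = (k+3) + 1 from rfl, Nat.factorial_succ]
    push_cast
    ring
  have f3 : ((k+3).factorial : ℝ) = (k+3) * ((k+2).factorial : ℝ) := by
    rw [show k + 3 = (k+2) + 1 from rfl, Nat.factorial_succ]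
    push_cast
    ring
  have f2 : ((k+2).factorial : ℝ) = (k+2) * ((k+1).factorial : ℝ) := by
    rw [show (k+2 : ℕ) = (k+1) + 1 from rfl, Nat.factorial_succ]
    push_cast
    ring
  have f1 : ((k+1).factorial : ℝ) = (k+1) * (k.factorial : ℝ) := by
    rw [show (k+1 : ℕ) = k + 1 from rfl, Nat.factorial_succ]
    push_cast
    ring
  have hF : (0:ℝ) < (k.factorial : ℝ) := by exact_mod_cast k.factorial_pos
  have hk0 : (0:ℝ) ≤ (k : ℝ) := Nat.cast_nonneg k
  rw [f4, f3, f2, f1]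
  simp only [Nat.factorial_zero, Nat.factorial_one,
    show ((2:ℕ).factorial) = 2 from rfl, show ((3:ℕ).factorial) = 6 from rfl]
  push_cast
  have hden : (0:ℝ) < ((k:ℝ)+4) * ((k:ℝ)+3) * ((k:ℝ)+2) * ((k:ℝ)+1) * (k.factorial : ℝ) := by
    positivity
  have key : ∀ E : ℝ, E = ((k:ℝ)+5) / (8*((k:ℝ)+3)*((k:ℝ)+4)) → 0 < E := by
    intro E hE
    rw [hE]
    positivity
  apply key
  field_simp
  ring

include hκ hv in
lemma shapley (hm : 2 ≤ m) (hκ2 : ∀ y, κ₂ y = true ↔ y = u)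
    (hκ3 : ∀ y : Fin m → Bool,
      (Finset.univ.filter (fun i => y i ≠ u i)).card = 1 → κ₃ y = true)
    (h12 : ∀ y, ¬(κ₁ y = true ∧ κ₂ y = true))
    (h13 : ∀ y, ¬(κ₁ y = true ∧ κ₃ y = true)) :
    |Sv κ v (idxB m)| < |Sv κ v (idxA m)| := by
  have hSA := SvA_eq hκ hv h12 h13
  have hSB := SvB_eq hκ hv h12 h13
  have hD : 0 < Sv κ v (idxA m) - Sv κ v (idxB m) := by
    rw [hSA, hSB, ← Finset.sum_sub_distrib]
    apply Finset.sum_pos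
    · intro S₀ _
      have e2v := e2_val hκ2 S₀
      have w1 := W_pos (m := m) S₀.card
      have w2 := W_pos (m := m) (S₀.card + 1)
      have hp : (0:ℝ) < 1 / 2 ^ (m - S₀.card) := by positivity
      rw [e2v]
      nlinarith [mul_pos w1 hp, mul_pos w2 hp]
    · exact ⟨∅, Finset.mem_powerset.mpr (Finset.empty_subset _)⟩
  have hT : 0 < Sv κ v (idxA m) + Sv κ v (idxB m) := by
    rw [hSA, hSB, ← Finset.sum_add_distrib]
    calc (0:ℝ) < ∑ S₀ ∈ (Finset.univ : Finset (Fin m)).powerset, lbd m S₀.card :=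
          sum_lbd_pos hm
      _ ≤ _ := Finset.sum_le_sum (fun S₀ _ => lbd_le_term hm hκ2 hκ3 S₀)
  have hA : 0 < Sv κ v (idxA m) := by linarith
  rw [abs_of_pos hA, abs_lt]
  constructor <;> linarith

end Main

end AuxStmt17

/-- Three-function construction on `n = m+2` features: `κ = κ₁` if `x_{n-1}=0`;
`κ₁ ∨ κ₂` if `x_{n-1}=1, xₙ=0`; `κ₁ ∨ κ₃` if `x_{n-1}=1, xₙ=1`. With `κ₂` true
only at `u`, `κ₃` false at `u` but true on its Hamming sphere of radius 1,
`κ₁ ∧ κ₂ = 0`, `κ₁ ∧ κ₃ = 0`, `κ₁ ∨ κ₂ ≠ 1`, `κ₁ ∨ κ₃ ≠ 1`, `κ₁ u = 0`: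
for `v = (u,1,1)` feature `n-1` is irrelevant, feature `n` is relevant, and
`|Sv(n-1)| > |Sv(n)|`. -/
theorem stmt17 (m : ℕ) (hm : 2 ≤ m)
    (κ₁ κ₂ κ₃ : (Fin m → Bool) → Bool) (u : Fin m → Bool)
    (hκ2 : ∀ y, κ₂ y = true ↔ y = u)
    (hκ3u : κ₃ u = false)
    (hκ3 : ∀ y : Fin m → Bool,
      (Finset.univ.filter (fun i => y i ≠ u i)).card = 1 → κ₃ y = true)
    (h12 : ∀ y, ¬(κ₁ y = true ∧ κ₂ y = true))
    (h13 : ∀ y, ¬(κ₁ y = true ∧ κ₃ y = true))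
    (h12' : ∃ y, κ₁ y = false ∧ κ₂ y = false)
    (h13' : ∃ y, κ₁ y = false ∧ κ₃ y = false)
    (hκ1u : κ₁ u = false)
    (κ : (Fin (m + 2) → Bool) → Bool)
    (hκ : ∀ x, κ x =
      if x ⟨m, by omega⟩ = false then
        κ₁ (fun i => x (Fin.castLE (by omega : m ≤ m + 2) i))
      else if x (Fin.last (m + 1)) = false then
        (κ₁ (fun i => x (Fin.castLE (by omega : m ≤ m + 2) i)) ||
         κ₂ (fun i => x (Fin.castLE (by omega : m ≤ m + 2) i)))
      else
        (κ₁ (fun i => x (Fin.castLE (by omega : m ≤ m + 2) i)) ||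
         κ₃ (fun i => x (Fin.castLE (by omega : m ≤ m + 2) i))))
    (v : Fin (m + 2) → Bool)
    (hv : ∀ j : Fin (m + 2), v j = if h : (j : ℕ) < m then u ⟨j, h⟩ else true) :
    Irrelevant κ v ⟨m, by omega⟩ ∧ Relevant κ v (Fin.last (m + 1)) ∧
      |Sv κ v (Fin.last (m + 1))| < |Sv κ v ⟨m, by omega⟩| := by
  refine ⟨irrel hκ hv hκ1u hκ3u, relev hκ hv hκ2 hκ3 hκ1u hκ3u, ?_⟩
  exact shapley hκ hv hm hκ2 hκ3 h12 h13
end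

section
/- For any n ≥ 3, there are at least 2^{2^{n−1}} − n − 3 boolean functions on n variables exhibiting issue I1: namely, for each non-constant κ₂ : 𝔹^{n−1} → 𝔹 not equal to any single positive literal nor to the function covering all points (so that a strictly smaller non-constant κ₁ with κ₁ ⊨ κ₂ exists), the combined function κ(y, x_n) = (x_n ? κ₂(y) : κ₁(y)) for distinct choices of κ₂ gives distinct functions with an irrelevant feature of nonzero Shapley value. -/
open Finset

def comb {m : ℕ} (f g : (Fin m → Bool) → Bool) : (Fin (m+1) → Bool) → Bool :=
  fun x => if x (Fin.last m) then g (Fin.init x) else f (Fin.init x)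

lemma comb_snoc {m : ℕ} (f g : (Fin m → Bool) → Bool) (y : Fin m → Bool) (b : Bool) :
    comb f g (Fin.snoc y b) = if b then g y else f y := by
  simp [comb]

lemma irrel_s18 {m : ℕ} (f g : (Fin m → Bool) → Bool) (p : Fin m → Bool)
    (hfg : ∀ y, f y = f p → g y = f p) :
    Irrelevant (comb f g) (Fin.snoc p false) (Fin.last m) := by
  rintro ⟨X, ⟨hwX, hmin⟩, hiX⟩
  refine hmin (X.erase (Fin.last m)) (Finset.erase_ssubset hiX) ?_
  intro x hx
  have hv : comb f g (Fin.snoc p false) = f p := by simp [comb]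
  set x' := Function.update x (Fin.last m) false with hx'def
  have hx'X : ∀ j ∈ X, x' j = (Fin.snoc p false : Fin (m+1) → Bool) j := by
    intro j hj
    by_cases hj' : j = Fin.last m
    · subst hj'
      rw [hx'def, Function.update_self, Fin.snoc_last]
    · rw [hx'def, Function.update_of_ne hj']
      exact hx j (Finset.mem_erase.mpr ⟨hj', hj⟩)
  have h1 : comb f g x' = f p := (hwX x' hx'X).trans hv
  have h2 : f (Fin.init x) = f p := by
    have hc : comb f g x' = f (Fin.init x') := by
      simp [comb, x']
    rw [hc, hx'def, Fin.init_update_last] at h1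
    exact h1
  have h3 : g (Fin.init x) = f p := hfg _ h2
  rw [hv]
  unfold comb
  cases hxl : x (Fin.last m) <;> simp [h2, h3]

lemma phi_diff {m : ℕ} (f g : (Fin m → Bool) → Bool) (p : Fin m → Bool)
    (S : Finset (Fin (m+1))) (hS : S ⊆ Finset.univ.erase (Fin.last m)) :
    phi (comb f g) (Fin.snoc p false) (insert (Fin.last m) S)
      - phi (comb f g) (Fin.snoc p false) S
    = (1 / 2 ^ (m + 1 - S.card)) *
      ∑ x ∈ Finset.univ.filter
          (fun x : Fin (m+1) → Bool =>
            ∀ j ∈ insert (Fin.last m) S, x j = (Fin.snoc p false : Fin (m+1) → Bool) j),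
        ((if f (Fin.init x) then (1:ℝ) else 0) - (if g (Fin.init x) then (1:ℝ) else 0)) := by
  have hiS : Fin.last m ∉ S := fun h => (Finset.mem_erase.mp (hS h)).1 rfl
  have hjS : ∀ j ∈ S, j ≠ Fin.last m := fun j hj => (Finset.mem_erase.mp (hS hj)).1
  have hScard : S.card ≤ m := by
    have h := Finset.card_le_card hS
    rw [Finset.card_erase_of_mem (Finset.mem_univ _), Finset.card_univ, Fintype.card_fin] at h
    omega
  set v : Fin (m+1) → Bool := Fin.snoc p false with hv
  have hvl : v (Fin.last m) = false := by simp [hv]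
  set T := Finset.univ.filter
      (fun x : Fin (m+1) → Bool => ∀ j ∈ insert (Fin.last m) S, x j = v j) with hT
  set U := Finset.univ.filter
      (fun x : Fin (m+1) → Bool => ∀ j ∈ S, x j = v j) with hU
  have hmemT : ∀ x, x ∈ T ↔ (x (Fin.last m) = false ∧ ∀ j ∈ S, x j = v j) := by
    intro x
    simp only [hT, Finset.mem_filter, Finset.mem_univ, true_and, Finset.forall_mem_insert, hvl]
  have hUf : U.filter (fun x => x (Fin.last m) = false) = T := by
    ext x
    simp only [Finset.mem_filter, hU, Finset.mem_univ, true_and, hmemT]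
    tauto
  -- sums
  have hTF : ∑ x ∈ T, (if comb f g x then (1:ℝ) else 0)
      = ∑ x ∈ T, (if f (Fin.init x) then (1:ℝ) else 0) := by
    refine Finset.sum_congr rfl fun x hx => ?_
    have hxl : x (Fin.last m) = false := ((hmemT x).mp hx).1
    simp [comb, hxl]
  have hUt : ∑ x ∈ U.filter (fun x => ¬ x (Fin.last m) = false),
        (if comb f g x then (1:ℝ) else 0)
      = ∑ x ∈ T, (if g (Fin.init x) then (1:ℝ) else 0) := by
    have step1 : ∑ x ∈ U.filter (fun x => ¬ x (Fin.last m) = false),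
        (if comb f g x then (1:ℝ) else 0)
        = ∑ x ∈ U.filter (fun x => ¬ x (Fin.last m) = false),
        (if g (Fin.init x) then (1:ℝ) else 0) := by
      refine Finset.sum_congr rfl fun x hx => ?_
      have hxl : x (Fin.last m) = true := by
        have := (Finset.mem_filter.mp hx).2
        simpa using this
      simp [comb, hxl]
    rw [step1]
    refine Finset.sum_nbij' (i := fun x => Function.update x (Fin.last m) false)
      (j := fun x => Function.update x (Fin.last m) true) ?_ ?_ ?_ ?_ ?_
    · intro x hx
      simp only [Finset.mem_filter, hU, Finset.mem_univ, true_and] at hx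
      rw [hmemT]
      refine ⟨Function.update_self _ _ _, fun j hj => ?_⟩
      show Function.update x (Fin.last m) false j = v j
      rw [Function.update_of_ne (hjS j hj)]
      exact hx.1 j hj
    · intro x hx
      rw [hmemT] at hx
      simp only [Finset.mem_filter, hU, Finset.mem_univ, true_and]
      refine ⟨fun j hj => ?_, by simp [Function.update_self]⟩
      show Function.update x (Fin.last m) true j = v j
      rw [Function.update_of_ne (hjS j hj)]
      exact hx.2 j hj
    · intro x hx
      have hxl : x (Fin.last m) = true := by
        have := (Finset.mem_filter.mp hx).2
        simpa using this
      show Function.update (Function.update x (Fin.last m) false) (Fin.last m) true = x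
      rw [Function.update_idem, ← hxl, Function.update_eq_self]
    · intro x hx
      have hxl : x (Fin.last m) = false := ((hmemT x).mp hx).1
      show Function.update (Function.update x (Fin.last m) true) (Fin.last m) false = x
      rw [Function.update_idem, ← hxl, Function.update_eq_self]
    · intro x hx
      rw [Fin.init_update_last]
  have hsplit : ∑ x ∈ U, (if comb f g x then (1:ℝ) else 0)
      = ∑ x ∈ T, (if f (Fin.init x) then (1:ℝ) else 0)
        + ∑ x ∈ T, (if g (Fin.init x) then (1:ℝ) else 0) := by
    rw [← Finset.sum_filter_add_sum_filter_not U (fun x => x (Fin.last m) = false), hUf, hTF, hUt]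
  have hcard : (insert (Fin.last m) S).card = S.card + 1 :=
    Finset.card_insert_of_notMem hiS
  have e1 : m + 1 - (S.card + 1) = m - S.card := by omega
  have e2 : m + 1 - S.card = (m - S.card) + 1 := by omega
  simp only [phi, hcard, ← hT, ← hU, e1, e2, hsplit, hTF, Finset.sum_sub_distrib]
  generalize (∑ x ∈ T, (if f (Fin.init x) then (1:ℝ) else 0)) = A
  generalize (∑ x ∈ T, (if g (Fin.init x) then (1:ℝ) else 0)) = B
  have h2 : (2:ℝ) ^ (m - S.card) ≠ 0 := by positivity
  rw [pow_succ]
  field_simp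
  ring

lemma weight_pos {m : ℕ} (S : Finset (Fin (m+1))) :
    (0:ℝ) < (S.card.factorial * ((m+1) - S.card - 1).factorial : ℝ) / (m+1).factorial := by
  apply div_pos
  · have h1 : (0:ℝ) < (S.card.factorial : ℝ) := by exact_mod_cast Nat.factorial_pos _
    have h2 : (0:ℝ) < (((m+1) - S.card - 1).factorial : ℝ) := by exact_mod_cast Nat.factorial_pos _
    exact mul_pos h1 h2
  · exact_mod_cast Nat.factorial_pos _

lemma sv_neg {m : ℕ} (f g : (Fin m → Bool) → Bool) (p y₀ : Fin m → Bool)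
    (hle : ∀ y, f y = true → g y = true) (hf0 : f y₀ = false) (hg1 : g y₀ = true) :
    Sv (comb f g) (Fin.snoc p false) (Fin.last m) < 0 := by
  unfold Sv
  have key : ∀ S ∈ (Finset.univ.erase (Fin.last m)).powerset,
      ((S.card.factorial * ((m+1) - S.card - 1).factorial : ℝ) / (m+1).factorial) *
        (phi (comb f g) (Fin.snoc p false) (insert (Fin.last m) S)
          - phi (comb f g) (Fin.snoc p false) S) ≤ 0 := by
    intro S hSmem
    have hS : S ⊆ Finset.univ.erase (Fin.last m) := Finset.mem_powerset.mp hSmem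
    rw [phi_diff f g p S hS]
    apply mul_nonpos_iff.mpr
    left
    refine ⟨(weight_pos S).le, ?_⟩
    apply mul_nonpos_iff.mpr
    left
    refine ⟨by positivity, ?_⟩
    apply Finset.sum_nonpos
    intro x hx
    cases hfx : f (Fin.init x)
    · simp [hfx]
      split <;> norm_num
    · simp [hfx, hle _ hfx]
  have keyempty :
      (((∅ : Finset (Fin (m+1))).card.factorial *
          ((m+1) - (∅ : Finset (Fin (m+1))).card - 1).factorial : ℝ) / (m+1).factorial) *
        (phi (comb f g) (Fin.snoc p false) (insert (Fin.last m) ∅)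
          - phi (comb f g) (Fin.snoc p false) ∅) < 0 := by
    rw [phi_diff f g p ∅ (Finset.empty_subset _)]
    apply mul_neg_of_pos_of_neg (weight_pos ∅)
    apply mul_neg_of_pos_of_neg (by positivity)
    have hx₀ : (Fin.snoc y₀ false : Fin (m+1) → Bool) ∈ Finset.univ.filter
        (fun x : Fin (m+1) → Bool =>
          ∀ j ∈ insert (Fin.last m) (∅ : Finset (Fin (m+1))),
            x j = (Fin.snoc p false : Fin (m+1) → Bool) j) := by
      simp
    have hlt : ∑ x ∈ Finset.univ.filter
        (fun x : Fin (m+1) → Bool =>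
          ∀ j ∈ insert (Fin.last m) (∅ : Finset (Fin (m+1))),
            x j = (Fin.snoc p false : Fin (m+1) → Bool) j),
        ((if f (Fin.init x) then (1:ℝ) else 0) - (if g (Fin.init x) then (1:ℝ) else 0))
        < ∑ _x ∈ Finset.univ.filter
        (fun x : Fin (m+1) → Bool =>
          ∀ j ∈ insert (Fin.last m) (∅ : Finset (Fin (m+1))),
            x j = (Fin.snoc p false : Fin (m+1) → Bool) j), (0:ℝ) := by
      apply Finset.sum_lt_sum
      · intro x hx
        cases hfx : f (Fin.init x)
        · simp [hfx]
          split <;> norm_num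
        · simp [hfx, hle _ hfx]
      · refine ⟨Fin.snoc y₀ false, hx₀, ?_⟩
        rw [Fin.init_snoc, hf0, hg1]
        norm_num
    simpa using hlt
  have := Finset.sum_lt_sum (s := (Finset.univ.erase (Fin.last m)).powerset)
    (f := fun S => ((S.card.factorial * ((m+1) - S.card - 1).factorial : ℝ) / (m+1).factorial) *
        (phi (comb f g) (Fin.snoc p false) (insert (Fin.last m) S)
          - phi (comb f g) (Fin.snoc p false) S))
    (g := fun _ => (0:ℝ))
    (fun S hS => key S hS)
    ⟨∅, Finset.empty_mem_powerset _, keyempty⟩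
  simpa using this

lemma sv_pos {m : ℕ} (f g : (Fin m → Bool) → Bool) (p y₀ : Fin m → Bool)
    (hle : ∀ y, g y = true → f y = true) (hf1 : f y₀ = true) (hg0 : g y₀ = false) :
    0 < Sv (comb f g) (Fin.snoc p false) (Fin.last m) := by
  unfold Sv
  have key : ∀ S ∈ (Finset.univ.erase (Fin.last m)).powerset,
      (0:ℝ) ≤ ((S.card.factorial * ((m+1) - S.card - 1).factorial : ℝ) / (m+1).factorial) *
        (phi (comb f g) (Fin.snoc p false) (insert (Fin.last m) S)
          - phi (comb f g) (Fin.snoc p false) S) := by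
    intro S hSmem
    have hS : S ⊆ Finset.univ.erase (Fin.last m) := Finset.mem_powerset.mp hSmem
    rw [phi_diff f g p S hS]
    apply mul_nonneg (weight_pos S).le
    apply mul_nonneg (by positivity)
    apply Finset.sum_nonneg
    intro x hx
    cases hgx : g (Fin.init x)
    · simp [hgx]
      split <;> norm_num
    · simp [hgx, hle _ hgx]
  have keyempty :
      (0:ℝ) < (((∅ : Finset (Fin (m+1))).card.factorial *
          ((m+1) - (∅ : Finset (Fin (m+1))).card - 1).factorial : ℝ) / (m+1).factorial) *
        (phi (comb f g) (Fin.snoc p false) (insert (Fin.last m) ∅)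
          - phi (comb f g) (Fin.snoc p false) ∅) := by
    rw [phi_diff f g p ∅ (Finset.empty_subset _)]
    apply mul_pos (weight_pos ∅)
    apply mul_pos (by positivity)
    have hx₀ : (Fin.snoc y₀ false : Fin (m+1) → Bool) ∈ Finset.univ.filter
        (fun x : Fin (m+1) → Bool =>
          ∀ j ∈ insert (Fin.last m) (∅ : Finset (Fin (m+1))),
            x j = (Fin.snoc p false : Fin (m+1) → Bool) j) := by
      simp
    have hlt : ∑ _x ∈ Finset.univ.filter
        (fun x : Fin (m+1) → Bool =>
          ∀ j ∈ insert (Fin.last m) (∅ : Finset (Fin (m+1))),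
            x j = (Fin.snoc p false : Fin (m+1) → Bool) j), (0:ℝ)
        < ∑ x ∈ Finset.univ.filter
        (fun x : Fin (m+1) → Bool =>
          ∀ j ∈ insert (Fin.last m) (∅ : Finset (Fin (m+1))),
            x j = (Fin.snoc p false : Fin (m+1) → Bool) j),
        ((if f (Fin.init x) then (1:ℝ) else 0) - (if g (Fin.init x) then (1:ℝ) else 0)) := by
      apply Finset.sum_lt_sum
      · intro x hx
        cases hgx : g (Fin.init x)
        · simp [hgx]
          split <;> norm_num
        · simp [hgx, hle _ hgx]
      · refine ⟨Fin.snoc y₀ false, hx₀, ?_⟩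
        rw [Fin.init_snoc, hf1, hg0]
        norm_num
    simpa using hlt
  have := Finset.sum_lt_sum (s := (Finset.univ.erase (Fin.last m)).powerset)
    (f := fun _ => (0:ℝ))
    (g := fun S => ((S.card.factorial * ((m+1) - S.card - 1).factorial : ℝ) / (m+1).factorial) *
        (phi (comb f g) (Fin.snoc p false) (insert (Fin.last m) S)
          - phi (comb f g) (Fin.snoc p false) S))
    (fun S hS => key S hS)
    ⟨∅, Finset.empty_mem_powerset _, keyempty⟩
  simpa using this

lemma main_ex {m : ℕ} (hm : 2 ≤ m) (g : (Fin m → Bool) → Bool)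
    (h1 : ∃ a, g a = true) (h0 : ∃ b, g b = false) :
    ∃ f : (Fin m → Bool) → Bool, ∃ (v : Fin (m+1) → Bool) (i : Fin (m+1)),
      Irrelevant (comb f g) v i ∧ Sv (comb f g) v i ≠ 0 := by
  classical
  obtain ⟨a, ha⟩ := h1
  by_cases hA : ∃ a', g a' = true ∧ a' ≠ a
  · obtain ⟨a', ha', hnea⟩ := hA
    refine ⟨fun y => decide (y = a), Fin.snoc a false, Fin.last m, ?_, ?_⟩
    · apply irrel_s18
      intro y hy
      have hfa : (decide (a = a) : Bool) = true := by simp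
      rw [hfa] at hy ⊢
      rw [decide_eq_true_eq] at hy
      subst hy; exact ha
    · refine ne_of_lt (sv_neg _ g a a' ?_ ?_ ha')
      · intro y hy
        rw [decide_eq_true_eq] at hy
        subst hy; exact ha
      · simp [hnea]
  · push_neg at hA
    have hall : ∀ y, y ≠ a → g y = false := by
      intro y hy
      cases hgy : g y
      · rfl
      · exact absurd (hA y hgy) hy
    -- find two distinct points ≠ a
    have hcard : 1 < (Finset.univ.erase a).card := by
      rw [Finset.card_erase_of_mem (Finset.mem_univ _), Finset.card_univ]
      have : 4 ≤ Fintype.card (Fin m → Bool) := by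
        rw [Fintype.card_fun, Fintype.card_bool, Fintype.card_fin]
        calc 4 = 2^2 := by norm_num
        _ ≤ 2^m := Nat.pow_le_pow_right (by norm_num) hm
      omega
    obtain ⟨b, hb, b', hb', hbb⟩ := Finset.one_lt_card.mp hcard
    have hba : b ≠ a := (Finset.mem_erase.mp hb).1
    have hb'a : b' ≠ a := (Finset.mem_erase.mp hb').1
    have hgb : g b = false := hall b hba
    have hgb' : g b' = false := hall b' hb'a
    refine ⟨fun y => g y || decide (y = b), Fin.snoc b' false, Fin.last m, ?_, ?_⟩
    · apply irrel_s18
      intro y hy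
      have hfb' : (g b' || decide (b' = b)) = false := by
        simp [hgb', hbb.symm]
      rw [hfb'] at hy ⊢
      simp only [Bool.or_eq_false_iff] at hy
      exact hy.1
    · refine ne_of_gt (sv_pos _ g b' b ?_ ?_ hgb)
      · intro y hy
        simp [hy]
      · simp [hgb]


/-- Lower bound for issue I1: for any `n ≥ 3`, at least `2^{2^{n-1}} − n − 3`
boolean functions on `n` variables admit an instance with an irrelevant feature of
nonzero Shapley value. -/
theorem stmt18 (n : ℕ) (hn : 3 ≤ n) :
    ∃ Fs : Finset ((Fin n → Bool) → Bool),
      2 ^ 2 ^ (n - 1) - n - 3 ≤ Fs.card ∧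
      ∀ κ ∈ Fs, ∃ (v : Fin n → Bool) (i : Fin n),
        Irrelevant κ v i ∧ Sv κ v i ≠ 0 := by
  classical
  obtain ⟨m, rfl⟩ : ∃ m, n = m + 1 := ⟨n - 1, by omega⟩
  have hm : 2 ≤ m := by omega
  refine ⟨Finset.univ.filter (fun κ : (Fin (m+1) → Bool) → Bool =>
      ∃ v i, Irrelevant κ v i ∧ Sv κ v i ≠ 0), ?_, ?_⟩
  · set Fs := Finset.univ.filter (fun κ : (Fin (m+1) → Bool) → Bool =>
      ∃ v i, Irrelevant κ v i ∧ Sv κ v i ≠ 0) with hFs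
    set s : Finset ((Fin m → Bool) → Bool) :=
      Finset.univ.filter (fun g => (∃ a, g a = true) ∧ (∃ b, g b = false)) with hs
    have hinj : s.card ≤ Fs.card := by
      apply Finset.card_le_card_of_injOn
        (fun g => if h : (∃ a, g a = true) ∧ (∃ b, g b = false)
          then comb (Classical.choose (main_ex hm g h.1 h.2)) g else fun _ => false)
      · intro g hg
        simp only [hs, Finset.coe_filter, Set.mem_setOf_eq, Finset.mem_filter, Finset.mem_univ, true_and] at hg
        simp only [dif_pos hg]
        simp only [hFs, Finset.coe_filter, Set.mem_setOf_eq, Finset.mem_filter, Finset.mem_univ, true_and]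
        exact Classical.choose_spec (main_ex hm g hg.1 hg.2)
      · intro g₁ h₁ g₂ h₂ heq
        simp only [hs, Finset.coe_filter, Set.mem_setOf_eq, Finset.mem_univ, true_and] at h₁ h₂
        simp only [dif_pos h₁, dif_pos h₂] at heq
        funext y
        have := congrFun heq (Fin.snoc y true)
        simpa [comb] using this
    have hcompl : (Finset.univ.filter (fun g : (Fin m → Bool) → Bool =>
        ¬((∃ a, g a = true) ∧ (∃ b, g b = false))))
        ⊆ {fun _ => false, fun _ => true} := by
      intro g hg
      simp only [Finset.mem_filter, Finset.mem_univ, true_and, not_and_or, not_exists] at hg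
      simp only [Finset.mem_insert, Finset.mem_singleton]
      rcases hg with h | h
      · left
        funext y
        have := h y
        simpa using this
      · right
        funext y
        have := h y
        simp only [Bool.not_eq_false] at this
        exact this
    have hcc : (Finset.univ.filter (fun g : (Fin m → Bool) → Bool =>
        ¬((∃ a, g a = true) ∧ (∃ b, g b = false)))).card ≤ 2 := by
      refine (Finset.card_le_card hcompl).trans ?_
      refine (Finset.card_insert_le _ _).trans ?_
      simp
    have htot : s.card + (Finset.univ.filter (fun g : (Fin m → Bool) → Bool =>
        ¬((∃ a, g a = true) ∧ (∃ b, g b = false)))).card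
        = 2 ^ 2 ^ m := by
      have hfc : Fintype.card ((Fin m → Bool) → Bool) = 2 ^ 2 ^ m := by
        rw [Fintype.card_fun, Fintype.card_fun, Fintype.card_bool, Fintype.card_fin]
      rw [hs, Finset.card_filter_add_card_filter_not, Finset.card_univ, hfc]
    have hred : m + 1 - 1 = m := rfl
    rw [hred]
    clear_value Fs s
    clear hcompl hs hFs
    generalize (Finset.univ.filter (fun g : (Fin m → Bool) → Bool =>
        ¬((∃ a, g a = true) ∧ (∃ b, g b = false)))).card = c at hcc htot
    generalize 2 ^ 2 ^ m = A at htot ⊢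
    generalize s.card = sc at hinj htot
    generalize Fs.card = fc at hinj ⊢
    omega
  · intro κ hκ
    simpa using (Finset.mem_filter.mp hκ).2
end
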